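/- If the conjecture on fair splitting of paths into q-stable sets holds for q = 2, then it holds for every q that is a power of 2. -/
import Mathlib


/-- A set of vertices of the path on `1,...,n` is `q`-stable if any two of its
elements are at distance at least `q`. -/
def QStable (q : ℕ) (S : Finset ℕ) : Prop :=
  ∀ a ∈ S, ∀ b ∈ S, a ≠ b → q ≤ Nat.dist a b

/-- The conjecture on fair splittings of paths into `q` pairwise disjoint
`q`-stable sets: they cover all vertices but `q-1` in each class, their sizes
differ by at most one, and `|S i ∩ V j| ≥ ⌊(|V j|+1)/q⌋ - 1`. -/
def SplitConj (q : ℕ) : Prop :=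
  ∀ (n m : ℕ) (V : Fin m → Finset ℕ),
    Finset.univ.biUnion V = Finset.Icc 1 n →
    (∀ j k : Fin m, j ≠ k → Disjoint (V j) (V k)) →
    (∀ j, q - 1 ≤ (V j).card) →
    ∃ S : Fin q → Finset ℕ,
      (∀ i, S i ⊆ Finset.Icc 1 n) ∧
      (∀ i k : Fin q, i ≠ k → Disjoint (S i) (S k)) ∧
      (∀ i, QStable q (S i)) ∧
      (∀ j, ∑ i, (S i ∩ V j).card = (V j).card - (q - 1)) ∧
      (∀ i k : Fin q, (S i).card ≤ (S k).card + 1) ∧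
      (∀ i j, ((V j).card + 1) / q - 1 ≤ (S i ∩ V j).card)

lemma sum_inter_card_eq {m : ℕ} (W : Fin m → Finset ℕ)
    (hd : ∀ j k : Fin m, j ≠ k → Disjoint (W j) (W k)) (T B : Finset ℕ)
    (hT : T ⊆ B) (hB : Finset.univ.biUnion W = B) :
    ∑ j, (T ∩ W j).card = T.card := by
  have hTe : Finset.univ.biUnion (fun j => T ∩ W j) = T := by
    ext x
    simp only [Finset.mem_biUnion, Finset.mem_inter, Finset.mem_univ, true_and]
    constructor
    · rintro ⟨j, hx, _⟩; exact hx
    · intro hx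
      have hx2 : x ∈ Finset.univ.biUnion W := hB ▸ hT hx
      simp only [Finset.mem_biUnion, Finset.mem_univ, true_and] at hx2
      obtain ⟨j, hj⟩ := hx2
      exact ⟨j, hx, hj⟩
  have hc := Finset.card_biUnion (s := (Finset.univ : Finset (Fin m)))
    (t := fun j => T ∩ W j) (fun j _ k _ hjk =>
      Finset.disjoint_of_subset_left Finset.inter_subset_right
        (Finset.disjoint_of_subset_right Finset.inter_subset_right (hd j k hjk)))
  rw [hTe] at hc
  exact hc.symm

lemma relabel (s : Finset ℕ) (hs : QStable 2 s) : ∃ g : ℕ → ℕ,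
    (∀ x ∈ Finset.Icc 1 s.card, g x ∈ s) ∧
    (∀ x ∈ Finset.Icc 1 s.card, ∀ y ∈ Finset.Icc 1 s.card, g x = g y → x = y) ∧
    (∀ y ∈ s, ∃ x ∈ Finset.Icc 1 s.card, g x = y) ∧
    (∀ x ∈ Finset.Icc 1 s.card, ∀ y ∈ Finset.Icc 1 s.card, x < y → g x + 2 * (y - x) ≤ g y) := by
  set f := s.orderEmbOfFin rfl with hf
  have hstep : ∀ d : ℕ, ∀ a b : Fin s.card, (b : ℕ) = (a : ℕ) + d → (f a : ℕ) + 2 * d ≤ f b := by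
    intro d
    induction d with
    | zero =>
      intro a b h
      have : a = b := Fin.ext (by omega)
      subst this; simp
    | succ d ih =>
      intro a b h
      have hb' : (a : ℕ) + d < s.card := by have := b.isLt; omega
      have h1 := ih a ⟨(a : ℕ) + d, hb'⟩ rfl
      have hlt : f ⟨(a : ℕ) + d, hb'⟩ < f b := f.strictMono (by rw [Fin.lt_def]; simp; omega)
      have h2 := hs _ (s.orderEmbOfFin_mem rfl ⟨(a : ℕ) + d, hb'⟩) _ (s.orderEmbOfFin_mem rfl b)
        (ne_of_lt hlt)
      rw [Nat.dist_eq_sub_of_le (le_of_lt hlt)] at h2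
      omega
  refine ⟨fun x => if h : x - 1 < s.card then f ⟨x - 1, h⟩ else 0, ?_, ?_, ?_, ?_⟩
  · intro x hx
    simp only [Finset.mem_Icc] at hx
    dsimp only
    rw [dif_pos (by omega : x - 1 < s.card)]
    exact s.orderEmbOfFin_mem rfl _
  · intro x hx y hy h
    simp only [Finset.mem_Icc] at hx hy
    dsimp only at h
    rw [dif_pos (by omega : x - 1 < s.card), dif_pos (by omega : y - 1 < s.card)] at h
    have h2 := congrArg Fin.val (f.injective h)
    simp only at h2
    omega
  · intro y hy
    have : y ∈ Set.range f := by rw [hf, Finset.range_orderEmbOfFin]; exact hy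
    obtain ⟨a, ha⟩ := this
    refine ⟨(a : ℕ) + 1, Finset.mem_Icc.mpr ⟨by omega, by have := a.isLt; omega⟩, ?_⟩
    dsimp only
    rw [dif_pos (by simpa using a.isLt : (a : ℕ) + 1 - 1 < s.card)]
    simpa using ha
  · intro x hx y hy hxy
    simp only [Finset.mem_Icc] at hx hy
    dsimp only
    rw [dif_pos (by omega : x - 1 < s.card), dif_pos (by omega : y - 1 < s.card)]
    exact hstep (y - x) ⟨x - 1, by omega⟩ ⟨y - 1, by omega⟩ (by simp; omega)

lemma splitConj_one : SplitConj 1 := by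
  intro n m V hcov hdis hcard
  have hVsub : ∀ j, V j ⊆ Finset.Icc 1 n := by
    intro j x hx
    rw [← hcov]
    exact Finset.mem_biUnion.mpr ⟨j, Finset.mem_univ j, hx⟩
  have hint : ∀ j, Finset.Icc 1 n ∩ V j = V j := fun j =>
    Finset.inter_eq_right.mpr (hVsub j)
  refine ⟨fun _ => Finset.Icc 1 n, fun _ => le_rfl, ?_, ?_, ?_, ?_, ?_⟩
  · intro i k h; exact absurd (Subsingleton.elim i k) h
  · intro i a _ b _ hab
    have : Nat.dist a b ≠ 0 := fun h => hab (Nat.eq_of_dist_eq_zero h)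
    omega
  · intro j; simp [hint j]
  · intro i k; exact Nat.le_succ _
  · intro i j; simp [hint j]

lemma splitConj_mul_two {q : ℕ} (hq : 0 < q) (h2 : SplitConj 2) (hq' : SplitConj q) :
    SplitConj (2 * q) := by
  obtain ⟨Q, rfl⟩ : ∃ Q, q = Q + 1 := ⟨q - 1, by omega⟩
  intro n m V hcov hdis hcard
  obtain ⟨S, hS1, hS2, hS3, hS4, hS5, hS6⟩ :=
    h2 n m V hcov hdis (fun j => by have := hcard j; omega)
  -- relabelling maps
  choose g hg1 hg2 hg3 hg4 using fun i : Fin 2 => relabel (S i) (hS3 i)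
  -- classes on the relabelled paths
  set W : Fin 2 → Fin m → Finset ℕ :=
    fun i j => (Finset.Icc 1 (S i).card).filter (fun x => g i x ∈ V j) with hW
  have hWsub : ∀ i j, W i j ⊆ Finset.Icc 1 (S i).card := fun i j => Finset.filter_subset _ _
  have hWcov : ∀ i, Finset.univ.biUnion (W i) = Finset.Icc 1 (S i).card := by
    intro i
    ext x
    simp only [hW, Finset.mem_biUnion, Finset.mem_filter, Finset.mem_univ, true_and]
    constructor
    · rintro ⟨j, hx, _⟩; exact hx
    · intro hx
      have hgx : g i x ∈ Finset.Icc 1 n := hS1 i (hg1 i x hx)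
      rw [← hcov] at hgx
      simp only [Finset.mem_biUnion, Finset.mem_univ, true_and] at hgx
      obtain ⟨j, hj⟩ := hgx
      exact ⟨j, hx, hj⟩
  have hWdis : ∀ i, ∀ j k : Fin m, j ≠ k → Disjoint (W i j) (W i k) := by
    intro i j k hjk
    rw [Finset.disjoint_left]
    intro x hxj hxk
    simp only [hW, Finset.mem_filter] at hxj hxk
    exact (Finset.disjoint_left.mp (hdis j k hjk)) hxj.2 hxk.2
  -- injectivity of g on subsets of the path
  have hinj : ∀ i : Fin 2, ∀ A : Finset ℕ, A ⊆ Finset.Icc 1 (S i).card →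
      (A.image (g i)).card = A.card :=
    fun i A hA => Finset.card_image_of_injOn (fun x hx y hy h => hg2 i x (hA hx) y (hA hy) h)
  -- W i j has the same size as S i ∩ V j
  have hWimg : ∀ i j, (W i j).image (g i) = S i ∩ V j := by
    intro i j
    ext y
    simp only [Finset.mem_image, Finset.mem_inter]
    constructor
    · rintro ⟨x, hx, rfl⟩
      simp only [hW, Finset.mem_filter] at hx
      exact ⟨hg1 i x hx.1, hx.2⟩
    · rintro ⟨hy1, hy2⟩
      obtain ⟨x, hx, rfl⟩ := hg3 i y hy1
      exact ⟨x, by simp only [hW, Finset.mem_filter]; exact ⟨hx, hy2⟩, rfl⟩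
  have hWcard : ∀ i j, (W i j).card = (S i ∩ V j).card := by
    intro i j
    rw [← hWimg i j, hinj i _ (hWsub i j)]
  -- lower bound on class sizes of the relabelled paths
  have hq2 : ∀ j, Q + 1 ≤ ((V j).card + 1) / 2 := by
    intro j
    rw [Nat.le_div_iff_mul_le (by norm_num)]
    have := hcard j
    omega
  have hWlb : ∀ i j, Q + 1 - 1 ≤ (W i j).card := by
    intro i j
    have h1 := hS6 i j
    have h2 := hq2 j
    rw [hWcard]
    omega
  -- apply the q-conjecture on each relabelled path
  choose T hT1 hT2 hT3 hT4 hT5 hT6 using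
    fun i : Fin 2 => hq' ((S i).card) m (W i) (hWcov i) (hWdis i) (hWlb i)
  -- key image identity
  have hkey : ∀ (i : Fin 2) (a : Fin (Q + 1)) (j : Fin m),
      ((T i a) ∩ W i j).image (g i) = (T i a).image (g i) ∩ V j := by
    intro i a j
    ext y
    simp only [Finset.mem_image, Finset.mem_inter]
    constructor
    · rintro ⟨x, ⟨hx1, hx2⟩, rfl⟩
      simp only [hW, Finset.mem_filter] at hx2
      exact ⟨⟨x, hx1, rfl⟩, hx2.2⟩
    · rintro ⟨⟨x, hx, rfl⟩, hy⟩
      exact ⟨x, ⟨hx, by simp only [hW, Finset.mem_filter]; exact ⟨hT1 i a hx, hy⟩⟩, rfl⟩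
  have hkeycard : ∀ (i : Fin 2) (a : Fin (Q + 1)) (j : Fin m),
      ((T i a).image (g i) ∩ V j).card = ((T i a) ∩ W i j).card := by
    intro i a j
    rw [← hkey, hinj i _ (fun x hx => hT1 i a (Finset.mem_inter.mp hx).1)]
  -- total sizes
  have hWsum : ∀ i, ∑ j, (W i j).card = (S i).card := by
    intro i
    have e : ∑ j, (W i j).card = ∑ j, (S i ∩ V j).card :=
      Finset.sum_congr rfl (fun j _ => hWcard i j)
    rw [e]
    exact sum_inter_card_eq V hdis (S i) (Finset.Icc 1 n) (hS1 i) hcov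
  have hTot : ∀ i, (∑ a, (T i a).card) + m * Q = (S i).card := by
    intro i
    have e1 : ∑ a, (T i a).card = ∑ j, ((W i j).card - Q) := by
      calc ∑ a, (T i a).card
          = ∑ a, ∑ j, ((T i a) ∩ W i j).card :=
            Finset.sum_congr rfl (fun a _ =>
              (sum_inter_card_eq (W i) (hWdis i) (T i a) (Finset.Icc 1 (S i).card)
                (hT1 i a) (hWcov i)).symm)
        _ = ∑ j, ∑ a, ((T i a) ∩ W i j).card := Finset.sum_comm
        _ = ∑ j, ((W i j).card - Q) := Finset.sum_congr rfl (fun j _ => by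
            have := hT4 i j; simpa using this)
    have e2 : (∑ j, ((W i j).card - Q)) + m * Q = ∑ j, (W i j).card := by
      have hm : m * Q = ∑ _j : Fin m, Q := by simp [mul_comm]
      rw [hm, ← Finset.sum_add_distrib]
      refine Finset.sum_congr rfl (fun j _ => Nat.sub_add_cancel ?_)
      have := hWlb i j; omega
    rw [e1, e2, hWsum]
  have hTotLe : ∀ i i' : Fin 2, ∑ a, (T i a).card ≤ (∑ a, (T i' a).card) + 1 := by
    intro i i'
    have h0 := hS5 i i'
    have h1 := hTot i
    have h2 := hTot i'
    omega
  -- cross balance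
  have hkey1 : ∀ (i : Fin 2) (a : Fin (Q + 1)),
      (Q + 1) * (T i a).card ≤ (∑ a', (T i a').card) + Q := by
    intro i a
    have he : (T i a).card + ∑ a' ∈ Finset.univ.erase a, (T i a').card = ∑ a', (T i a').card :=
      Finset.add_sum_erase Finset.univ (fun a' => (T i a').card) (Finset.mem_univ a)
    have hcard' : (Finset.univ.erase a).card = Q := by
      rw [Finset.card_erase_of_mem (Finset.mem_univ a)]
      simp
    have hlb : (Finset.univ.erase a).card • (T i a).card
        ≤ ∑ a' ∈ Finset.univ.erase a, ((T i a').card + 1) :=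
      Finset.card_nsmul_le_sum _ _ _ (fun a' _ => by have := hT5 i a a'; omega)
    rw [hcard', smul_eq_mul, Finset.sum_add_distrib, Finset.sum_const, hcard',
      smul_eq_mul, mul_one] at hlb
    have hid : (Q + 1) * (T i a).card = (T i a).card + Q * (T i a).card := by ring
    omega
  have hkey2 : ∀ (i : Fin 2) (a : Fin (Q + 1)),
      (∑ a', (T i a').card) ≤ (Q + 1) * (T i a).card + Q := by
    intro i a
    have he : (T i a).card + ∑ a' ∈ Finset.univ.erase a, (T i a').card = ∑ a', (T i a').card :=
      Finset.add_sum_erase Finset.univ (fun a' => (T i a').card) (Finset.mem_univ a)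
    have hcard' : (Finset.univ.erase a).card = Q := by
      rw [Finset.card_erase_of_mem (Finset.mem_univ a)]
      simp
    have hub : ∑ a' ∈ Finset.univ.erase a, (T i a').card
        ≤ (Finset.univ.erase a).card • ((T i a).card + 1) :=
      Finset.sum_le_card_nsmul _ _ _ (fun a' _ => by have := hT5 i a' a; omega)
    rw [hcard', smul_eq_mul] at hub
    have hid1 : Q * ((T i a).card + 1) = Q * (T i a).card + Q := by ring
    have hid2 : (Q + 1) * (T i a).card = (T i a).card + Q * (T i a).card := by ring
    omega
  have hbal : ∀ (i : Fin 2) (a : Fin (Q + 1)) (i' : Fin 2) (a' : Fin (Q + 1)),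
      (T i a).card ≤ (T i' a').card + 1 := by
    intro i a i' a'
    by_cases h : i = i'
    · subst h; exact hT5 i a a'
    · have h1 := hkey1 i a
      have h2 := hkey2 i' a'
      have h3 := hTotLe i i'
      have h4 : (Q + 1) * (T i a).card < (Q + 1) * ((T i' a').card + 2) := by
        have hid : (Q + 1) * ((T i' a').card + 2) = (Q + 1) * (T i' a').card + 2 * Q + 2 := by
          ring
        omega
      have := Nat.lt_of_mul_lt_mul_left h4
      omega
  -- generic facts about the image sets
  have hUsub : ∀ (i : Fin 2) (a : Fin (Q + 1)), (T i a).image (g i) ⊆ S i := by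
    intro i a y hy
    obtain ⟨x, hx, rfl⟩ := Finset.mem_image.mp hy
    exact hg1 i x (hT1 i a hx)
  have hUdisj : ∀ (i : Fin 2) (a : Fin (Q + 1)) (i' : Fin 2) (a' : Fin (Q + 1)),
      (i, a) ≠ (i', a') → Disjoint ((T i a).image (g i)) ((T i' a').image (g i')) := by
    intro i a i' a' hne
    by_cases h : i = i'
    · subst h
      have ha : a ≠ a' := fun h2 => hne (by rw [h2])
      rw [Finset.disjoint_left]
      intro y hy1 hy2
      obtain ⟨x, hx, hxy⟩ := Finset.mem_image.mp hy1
      obtain ⟨x', hx', hxy'⟩ := Finset.mem_image.mp hy2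
      have hxx : x = x' := hg2 i x (hT1 i a hx) x' (hT1 i a' hx') (hxy.trans hxy'.symm)
      exact (Finset.disjoint_left.mp (hT2 i a a' ha)) hx (hxx ▸ hx')
    · exact Finset.disjoint_of_subset_left (hUsub i a)
        (Finset.disjoint_of_subset_right (hUsub i' a') (hS2 i i' h))
  have hUstable : ∀ (i : Fin 2) (a : Fin (Q + 1)),
      QStable (2 * (Q + 1)) ((T i a).image (g i)) := by
    intro i a x' hx' y' hy' hne
    obtain ⟨x, hx, rfl⟩ := Finset.mem_image.mp hx'
    obtain ⟨y, hy, rfl⟩ := Finset.mem_image.mp hy'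
    have hxI := hT1 i a hx
    have hyI := hT1 i a hy
    have hxy : x ≠ y := fun h => hne (by rw [h])
    have hdxy := hT3 i a x hx y hy hxy
    rcases lt_or_gt_of_ne hxy with h | h
    · have hexp := hg4 i x hxI y hyI h
      have hd : Nat.dist x y = y - x := Nat.dist_eq_sub_of_le (le_of_lt h)
      have h2q : 2 * (Q + 1) ≤ 2 * (y - x) := by
        apply Nat.mul_le_mul_left
        omega
      have hle : g i x ≤ g i y := by omega
      rw [Nat.dist_eq_sub_of_le hle]
      omega
    · have hexp := hg4 i y hyI x hxI h
      have hd : Nat.dist x y = x - y := by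
        rw [Nat.dist_comm]
        exact Nat.dist_eq_sub_of_le (le_of_lt h)
      have h2q : 2 * (Q + 1) ≤ 2 * (x - y) := by
        apply Nat.mul_le_mul_left
        omega
      have hle : g i y ≤ g i x := by omega
      rw [Nat.dist_comm, Nat.dist_eq_sub_of_le hle]
      omega
  -- assemble the final family
  refine ⟨fun idx =>
    (T (finProdFinEquiv.symm idx).1 (finProdFinEquiv.symm idx).2).image
      (g (finProdFinEquiv.symm idx).1), ?_, ?_, ?_, ?_, ?_, ?_⟩
  · intro idx
    exact fun y hy => hS1 _ (hUsub _ _ hy)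
  · intro idx k hik
    apply hUdisj
    intro h
    apply hik
    have h1 := congrArg Prod.fst h
    have h2 := congrArg Prod.snd h
    exact finProdFinEquiv.symm.injective (Prod.ext h1 h2)
  · intro idx
    exact hUstable _ _
  · intro j
    have hsum : ∑ idx : Fin (2 * (Q + 1)),
        ((T (finProdFinEquiv.symm idx).1 (finProdFinEquiv.symm idx).2).image
          (g (finProdFinEquiv.symm idx).1) ∩ V j).card
        = ∑ p : Fin 2 × Fin (Q + 1), ((T p.1 p.2).image (g p.1) ∩ V j).card := by
      apply Fintype.sum_equiv finProdFinEquiv.symm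
      intro idx
      rfl
    rw [hsum, Fintype.sum_prod_type, Fin.sum_univ_two]
    have e : ∀ i : Fin 2, ∑ a, ((T i a).image (g i) ∩ V j).card
        = (W i j).card - Q := by
      intro i
      have e1 : ∑ a, ((T i a).image (g i) ∩ V j).card = ∑ a, ((T i a) ∩ W i j).card :=
        Finset.sum_congr rfl (fun a _ => hkeycard i a j)
      rw [e1]
      have := hT4 i j
      simpa using this
    rw [e 0, e 1]
    have h0 := hWlb 0 j
    have h1 := hWlb 1 j
    have h2 := hS4 j
    rw [Fin.sum_univ_two] at h2
    have h3 := hWcard 0 j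
    have h4 := hWcard 1 j
    have h5 := hcard j
    omega
  · intro idx k
    have e1 := hinj (finProdFinEquiv.symm idx).1 _ (hT1 (finProdFinEquiv.symm idx).1
      (finProdFinEquiv.symm idx).2)
    have e2 := hinj (finProdFinEquiv.symm k).1 _ (hT1 (finProdFinEquiv.symm k).1
      (finProdFinEquiv.symm k).2)
    rw [e1, e2]
    exact hbal _ _ _ _
  · intro idx j
    rw [hkeycard (finProdFinEquiv.symm idx).1 (finProdFinEquiv.symm idx).2 j]
    have h1 := hT6 (finProdFinEquiv.symm idx).1 (finProdFinEquiv.symm idx).2 j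
    have h2 := hS6 (finProdFinEquiv.symm idx).1 j
    have h3 := hWcard (finProdFinEquiv.symm idx).1 j
    have h4 : ((V j).card + 1) / (2 * (Q + 1))
        ≤ ((W (finProdFinEquiv.symm idx).1 j).card + 1) / (Q + 1) := by
      have h5 : ((V j).card + 1) / (2 * (Q + 1)) = ((V j).card + 1) / 2 / (Q + 1) := by
        rw [Nat.div_div_eq_div_mul]
      rw [h5]
      apply Nat.div_le_div_right
      omega
    omega

/-- If the conjecture holds for `q = 2`, then it holds for every power of two. -/
theorem splitConj_two_pow (h2 : SplitConj 2) : ∀ k : ℕ, SplitConj (2 ^ k) := by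
  intro k
  induction k with
  | zero =>
    simpa using splitConj_one
  | succ k ih =>
    have h := splitConj_mul_two (pow_pos (by norm_num) k) h2 ih
    rw [pow_succ, mul_comm]
    exact h
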